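/- Let μ > 0 and let P, Q be probability measures on a measurable space Ω such that for every measurable test φ : Ω → [0,1], 1 − ∫ φ dQ ≥ Φ(Φ^{-1}(1 − ∫ φ dP) − μ). Then for every ε ≥ 0 and every measurable set A ⊆ Ω, P(A) ≤ e^ε Q(A) + δ(ε), where δ(ε) = Φ(−ε/μ + μ/2) − e^ε Φ(−ε/μ − μ/2). (This is one direction of Corollary 1: a μ-GDP mechanism is (ε, δ(ε))-DP for all ε ≥ 0.) -/

import Mathlib

/-! For a test `φ` with `p = 1 - ∫ φ dP ∈ (0, 1)` and `t = Φ⁻¹ p`, the GDP bound gives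
`p - e^ε (1 - ∫ φ dQ) ≤ Φ(t) - e^ε Φ(t - μ)`. As a function of `t` the right side has derivative
`φ₀(t) - e^ε φ₀(t - μ) = φ₀(t) (1 - e^{μ (t - t₀)})` (`φ₀` the standard normal density,
`t₀ = -ε/μ + μ/2`), which changes sign from `+` to `-` at `t₀`; so it is at most its value at
`t₀`, which is `δ(ε)`. The mixed test `(1 - s) 𝟙_{Aᶜ} + s/2` keeps `p` inside `(0, 1)`, where `Φ⁻¹`
is a true inverse, and `s → 0` gives `P(A) - e^ε Q(A) ≤ δ(ε)`. -/

open MeasureTheory ProbabilityTheory Set Filter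
open scoped Topology

/-- Standard normal cumulative distribution function Φ. -/
noncomputable def stdGaussCDF (x : ℝ) : ℝ := ((gaussianReal 0 1) (Set.Iic x)).toReal

/-- Inverse Φ⁻¹ of the standard normal CDF (on (0,1)). -/
noncomputable def stdGaussCDFInv (p : ℝ) : ℝ := Function.invFun stdGaussCDF p

lemma intervalIntegral_nonpos_of_sign_change {ν : Measure ℝ} {h : ℝ → ℝ} {c : ℝ}
    (hl : ∀ x ≤ c, 0 ≤ h x) (hr : ∀ x, c ≤ x → h x ≤ 0) (t : ℝ) : ∫ x in c..t, h x ∂ν ≤ 0 := by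
  rcases le_total c t with hct | htc
  · have := intervalIntegral.integral_nonneg (μ := ν) hct fun x hx => neg_nonneg.mpr (hr x hx.1)
    rw [intervalIntegral.integral_neg] at this
    linarith
  · rw [intervalIntegral.integral_symm, neg_nonpos]
    exact intervalIntegral.integral_nonneg htc fun x hx => hl x hx.2

lemma stdGaussCDF_eq_cdf : stdGaussCDF = cdf (gaussianReal 0 1) := by
  funext x
  rw [stdGaussCDF, cdf_eq_real, measureReal_def]

lemma stdGaussCDF_sub_stdGaussCDF (a b : ℝ) :
    stdGaussCDF b - stdGaussCDF a = ∫ t in a..b, gaussianPDFReal 0 1 t := by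
  simp only [stdGaussCDF, gaussianReal_apply_eq_integral _ one_ne_zero,
    ENNReal.toReal_ofReal (integral_nonneg fun t => gaussianPDFReal_nonneg _ _ _)]
  exact intervalIntegral.integral_Iic_sub_Iic (integrable_gaussianPDFReal 0 1).integrableOn
    (integrable_gaussianPDFReal 0 1).integrableOn

lemma continuous_stdGaussCDF : Continuous stdGaussCDF := by
  have h : stdGaussCDF = fun x => stdGaussCDF 0 + ∫ t in (0 : ℝ)..x, gaussianPDFReal 0 1 t := by
    funext x
    rw [← stdGaussCDF_sub_stdGaussCDF]
    ring
  rw [h]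
  exact continuous_const.add <| intervalIntegral.continuous_primitive
    (fun _ _ => (integrable_gaussianPDFReal 0 1).intervalIntegrable) 0

lemma stdGaussCDF_stdGaussCDFInv {p : ℝ} (hp : p ∈ Ioo 0 1) :
    stdGaussCDF (stdGaussCDFInv p) = p :=
  Function.invFun_eq <| mem_range_of_exists_le_of_exists_ge continuous_stdGaussCDF
    (((stdGaussCDF_eq_cdf ▸ tendsto_cdf_atBot _).eventually_le_const hp.1).exists)
    (((stdGaussCDF_eq_cdf ▸ tendsto_cdf_atTop _).eventually_const_le hp.2).exists)

lemma gaussianPDFReal_sub_exp_mul_shift {μ : ℝ} (hμ : μ ≠ 0) (ε x : ℝ) :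
    gaussianPDFReal 0 1 x - Real.exp ε * gaussianPDFReal 0 1 (x - μ) =
      gaussianPDFReal 0 1 x * (1 - Real.exp (μ * (x - (-ε / μ + μ / 2)))) := by
  simp only [gaussianPDFReal, NNReal.coe_one, mul_one, sub_zero]
  rw [mul_sub, mul_one, mul_left_comm, ← Real.exp_add, mul_assoc, ← Real.exp_add]
  congr 3
  field_simp
  ring

lemma stdGaussCDF_sub_exp_mul_le {μ : ℝ} (hμ : 0 < μ) (ε t : ℝ) :
    stdGaussCDF t - Real.exp ε * stdGaussCDF (t - μ) ≤
      stdGaussCDF (-ε / μ + μ / 2) - Real.exp ε * stdGaussCDF (-ε / μ - μ / 2) := by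
  set c := -ε / μ + μ / 2
  have hdiff : (stdGaussCDF t - Real.exp ε * stdGaussCDF (t - μ)) -
      (stdGaussCDF c - Real.exp ε * stdGaussCDF (c - μ)) =
        ∫ x in c..t, (gaussianPDFReal 0 1 x - Real.exp ε * gaussianPDFReal 0 1 (x - μ)) := by
    rw [intervalIntegral.integral_sub (integrable_gaussianPDFReal 0 1).intervalIntegrable
        (((integrable_gaussianPDFReal 0 1).comp_sub_right μ).intervalIntegrable.const_mul _),
      intervalIntegral.integral_const_mul, intervalIntegral.integral_comp_sub_right,
      ← stdGaussCDF_sub_stdGaussCDF, ← stdGaussCDF_sub_stdGaussCDF]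
    ring
  have hsign :
      ∫ x in c..t, (gaussianPDFReal 0 1 x - Real.exp ε * gaussianPDFReal 0 1 (x - μ)) ≤ 0 := by
    refine intervalIntegral_nonpos_of_sign_change (fun x hx => ?_) (fun x hx => ?_) t <;>
      rw [gaussianPDFReal_sub_exp_mul_shift hμ.ne']
    · exact mul_nonneg (gaussianPDFReal_nonneg _ _ _) (sub_nonneg.mpr (Real.exp_le_one_iff.mpr
        (mul_nonpos_of_nonneg_of_nonpos hμ.le (sub_nonpos.mpr hx))))
    · exact mul_nonpos_of_nonneg_of_nonpos (gaussianPDFReal_nonneg _ _ _)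
        (sub_nonpos.mpr (Real.one_le_exp_iff.mpr (mul_nonneg hμ.le (sub_nonneg.mpr hx))))
  have hc : -ε / μ - μ / 2 = c - μ := by ring
  rw [hc]
  linarith

lemma sub_exp_mul_le_of_gaussianTradeoff {Ω : Type*} [MeasurableSpace Ω] {μ : ℝ} (hμ : 0 < μ)
    {P Q : Measure Ω}
    (hGDP : ∀ φ : Ω → ℝ, Measurable φ → (∀ x, φ x ∈ Set.Icc (0 : ℝ) 1) →
      1 - ∫ x, φ x ∂Q ≥ stdGaussCDF (stdGaussCDFInv (1 - ∫ x, φ x ∂P) - μ))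
    (ε : ℝ) {φ : Ω → ℝ} (hφm : Measurable φ) (hφ : ∀ x, φ x ∈ Icc (0 : ℝ) 1)
    (hP : 1 - ∫ x, φ x ∂P ∈ Ioo 0 1) :
    (1 - ∫ x, φ x ∂P) - Real.exp ε * (1 - ∫ x, φ x ∂Q) ≤
      stdGaussCDF (-ε / μ + μ / 2) - Real.exp ε * stdGaussCDF (-ε / μ - μ / 2) := by
  set t := stdGaussCDFInv (1 - ∫ x, φ x ∂P)
  calc (1 - ∫ x, φ x ∂P) - Real.exp ε * (1 - ∫ x, φ x ∂Q)
      ≤ stdGaussCDF t - Real.exp ε * stdGaussCDF (t - μ) := by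
        rw [stdGaussCDF_stdGaussCDFInv hP]
        gcongr
        exact hGDP φ hφm hφ
    _ ≤ _ := stdGaussCDF_sub_exp_mul_le hμ ε t

lemma one_sub_integral_mix_indicator_compl {Ω : Type*} [MeasurableSpace Ω] (ν : Measure Ω)
    [IsProbabilityMeasure ν] {A : Set Ω} (hA : MeasurableSet A) (s : ℝ) :
    1 - ∫ x, ((1 - s) * Aᶜ.indicator 1 x + s / 2) ∂ν = (1 - s) * ν.real A + s / 2 := by
  rw [integral_add ((integrable_const 1).indicator hA.compl |>.const_mul _) (integrable_const _),
    integral_const_mul, integral_indicator_one hA.compl, probReal_compl_eq_one_sub hA,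
    integral_const, probReal_univ, one_smul]
  ring

lemma mul_indicator_add_half_mem_Icc {Ω : Type*} {s : ℝ} (hs : s ∈ Icc (0 : ℝ) 1) (B : Set Ω)
    (x : Ω) : (1 - s) * B.indicator 1 x + s / 2 ∈ Icc (0 : ℝ) 1 := by
  by_cases hx : x ∈ B <;> simp only [hx, indicator_of_mem, indicator_of_notMem, not_false_eq_true,
    Pi.one_apply, mul_one, mul_zero, zero_add] <;> constructor <;> linarith [hs.1, hs.2]

/-- One direction of Corollary 1 of Dong et al.: if the pair `(P, Q)` satisfies the `μ`-GDP
trade-off bound (every measurable test `φ : Ω → [0,1]` has type-II error at least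
`Φ(Φ⁻¹(1 - type-I error) - μ)`), then for every `ε ≥ 0` and measurable `A`,
`P(A) ≤ e^ε Q(A) + δ(ε)` with `δ(ε) = Φ(-ε/μ + μ/2) - e^ε Φ(-ε/μ - μ/2)`. -/
theorem GDP_implies_DP {Ω : Type*} [MeasurableSpace Ω] (μ : ℝ) (hμ : 0 < μ)
    (P Q : Measure Ω) [IsProbabilityMeasure P] [IsProbabilityMeasure Q]
    (hGDP : ∀ φ : Ω → ℝ, Measurable φ → (∀ x, φ x ∈ Set.Icc (0 : ℝ) 1) →
      1 - ∫ x, φ x ∂Q ≥ stdGaussCDF (stdGaussCDFInv (1 - ∫ x, φ x ∂P) - μ)) :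
    ∀ ε : ℝ, 0 ≤ ε → ∀ A : Set Ω, MeasurableSet A →
      (P A).toReal ≤ Real.exp ε * (Q A).toReal +
        (stdGaussCDF (-ε / μ + μ / 2) - Real.exp ε * stdGaussCDF (-ε / μ - μ / 2)) := by
  intro ε _ A hA
  set g : ℝ → ℝ := fun s =>
    ((1 - s) * P.real A + s / 2) - Real.exp ε * ((1 - s) * Q.real A + s / 2)
  have hmix : ∀ s ∈ Ioo (0 : ℝ) 1,
      g s ≤ stdGaussCDF (-ε / μ + μ / 2) - Real.exp ε * stdGaussCDF (-ε / μ - μ / 2) := by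
    intro s ⟨hs0, hs1⟩
    have hPA0 : 0 ≤ P.real A := measureReal_nonneg
    have hPA1 : P.real A ≤ 1 := measureReal_le_one
    have h := sub_exp_mul_le_of_gaussianTradeoff hμ hGDP ε
      (φ := fun x => (1 - s) * Aᶜ.indicator 1 x + s / 2)
      (((measurable_const.indicator hA.compl).const_mul _).add measurable_const)
      (mul_indicator_add_half_mem_Icc ⟨hs0.le, hs1.le⟩ Aᶜ)
      (by rw [one_sub_integral_mix_indicator_compl P hA]; constructor <;> nlinarith)
    rwa [one_sub_integral_mix_indicator_compl P hA, one_sub_integral_mix_indicator_compl Q hA] at h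
  have hlim : Tendsto g (𝓝[>] 0) (𝓝 (g 0)) :=
    ((by fun_prop : Continuous g).tendsto 0).mono_left nhdsWithin_le_nhds
  have h0 := le_of_tendsto hlim (Filter.eventually_of_mem (Ioo_mem_nhdsGT one_pos) hmix)
  simp only [g, sub_zero, one_mul, zero_div, add_zero, measureReal_def] at h0
  linarith
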